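/- arXiv:2007.00962 — 7 statements merged into one kernel-verified Lean document; each statement's English description precedes it below -/
import Mathlib

section
/- Let p ≥ 2 and let a, b ∈ U_p with a ~ b. Then τ_p(a) = τ_p(b); that is, τ_p is an invariant of the equivalence relation ~. -/
open scoped Classical

/-- Tuples over `ZMod p` of arbitrary length (`U_p` lives among these). -/
abbrev DehnTuple (p : ℕ) := Σ n : ℕ, Fin n → ZMod p

/-- (Op1): cyclic shift `(a_1,…,a_n) → (a_2,…,a_n,a_1)`. -/
def dOp1 {p n : ℕ} (hn : 0 < n) (a : Fin n → ZMod p) : Fin n → ZMod p :=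
  fun i => a ⟨(i.1 + 1) % n, Nat.mod_lt _ hn⟩

/-- (Op2): `(a_1,…,a_n) → (x, a_2+(-1)^2(a_1-x), …, a_n+(-1)^n(a_1-x))`. -/
def dOp2 {p n : ℕ} (hn : 0 < n) (x : ZMod p) (a : Fin n → ZMod p) : Fin n → ZMod p :=
  fun i => a i + (-1 : ZMod p) ^ (i.1 + 1) * (a ⟨0, hn⟩ - x)

/-- (Op3): `(a_1,…,a_n) → (x, a_1-a_2+x, …, a_1-a_n+x)`. -/
def dOp3 {p n : ℕ} (hn : 0 < n) (x : ZMod p) (a : Fin n → ZMod p) : Fin n → ZMod p :=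
  fun i => a ⟨0, hn⟩ - a i + x

/-- (Op4): `(a_1,…,a_n) → (a_1, -a_1+a_2+a_3, a_3, …, a_n)` (needs `n > 2`). -/
def dOp4 {p n : ℕ} (hn : 2 < n) (a : Fin n → ZMod p) : Fin n → ZMod p :=
  fun i => if i.1 = 1 then -a ⟨0, by omega⟩ + a ⟨1, by omega⟩ + a ⟨2, hn⟩ else a i

/-- A single transformation (Op1)–(Op4) on tuples in `U_p`
(tuples of even positive length). -/
inductive DehnStep (p : ℕ) : DehnTuple p → DehnTuple p → Prop
  | op1 {n : ℕ} (hn : 0 < n) (he : Even n) (a : Fin n → ZMod p) :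
      DehnStep p ⟨n, a⟩ ⟨n, dOp1 hn a⟩
  | op2 {n : ℕ} (hn : 0 < n) (he : Even n) (x : ZMod p) (a : Fin n → ZMod p) :
      DehnStep p ⟨n, a⟩ ⟨n, dOp2 hn x a⟩
  | op3 {n : ℕ} (hn : 0 < n) (he : Even n) (x : ZMod p) (a : Fin n → ZMod p) :
      DehnStep p ⟨n, a⟩ ⟨n, dOp3 hn x a⟩
  | op4 {n : ℕ} (hn : 2 < n) (he : Even n) (a : Fin n → ZMod p) :
      DehnStep p ⟨n, a⟩ ⟨n, dOp4 hn a⟩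

/-- `a ~ b`: related by a finite sequence of the transformations (Op1)–(Op4). -/
def DehnEquiv (p : ℕ) : DehnTuple p → DehnTuple p → Prop :=
  Relation.ReflTransGen (DehnStep p)

/-- An `R`-palette for Dehn `p`-colorings: a set of tuples closed under the
operations (i)–(iv). -/
def IsRPalette (p : ℕ) (P : Set (DehnTuple p)) : Prop :=
  (∀ {n : ℕ} (hn : 0 < n) (a : Fin n → ZMod p),
      (⟨n, a⟩ : DehnTuple p) ∈ P → (⟨n, dOp1 hn a⟩ : DehnTuple p) ∈ P) ∧
  (∀ {n : ℕ} (hn : 0 < n) (x : ZMod p) (a : Fin n → ZMod p),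
      (⟨n, a⟩ : DehnTuple p) ∈ P → (⟨n, dOp2 hn x a⟩ : DehnTuple p) ∈ P) ∧
  (∀ {n : ℕ} (hn : 0 < n) (x : ZMod p) (a : Fin n → ZMod p),
      (⟨n, a⟩ : DehnTuple p) ∈ P → (⟨n, dOp3 hn x a⟩ : DehnTuple p) ∈ P) ∧
  (∀ {n : ℕ} (hn : 2 < n) (a : Fin n → ZMod p),
      (⟨n, a⟩ : DehnTuple p) ∈ P → (⟨n, dOp4 hn a⟩ : DehnTuple p) ∈ P)

/-- The alternating set `A_p`: tuples of even positive length of the form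
`(x, y, x, y, …, x, y)`. -/
def altSet (p : ℕ) : Set (DehnTuple p) :=
  {t | 0 < t.1 ∧ Even t.1 ∧
    ∃ x y : ZMod p, ∀ i : Fin t.1, t.2 i = if Even i.1 then x else y}

/-- The cyclic consecutive sums `a_i + a_{i+1}` of integer representatives. -/
def cycS {p n : ℕ} (hn : 0 < n) (a : Fin n → ZMod p) (i : Fin n) : ℕ :=
  (a i).val + (a ⟨(i.1 + 1) % n, Nat.mod_lt _ hn⟩).val

/-- `τ_p(a)`: the largest `k ∈ {1,…,p}` dividing `p` such that all cyclic
consecutive sums are congruent mod `k`. -/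
noncomputable def tauInv (p : ℕ) {n : ℕ} (hn : 0 < n) (a : Fin n → ZMod p) : ℕ :=
  sSup {k : ℕ | 0 < k ∧ k ∣ p ∧ ∀ i j : Fin n, cycS hn a i ≡ cycS hn a j [MOD k]}

/-- `ε_p(a)`: `0` if all cyclic consecutive sums are even, `1` if all are odd,
`∞` otherwise. -/
noncomputable def epsInv (p : ℕ) {n : ℕ} (hn : 0 < n) (a : Fin n → ZMod p) : WithTop ℕ :=
  if ∀ i, Even (cycS hn a i) then 0
  else if ∀ i, Odd (cycS hn a i) then 1
  else ⊤

/-- `μ_p(a) = E(a) - O(a)`. -/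
noncomputable def muInv (p : ℕ) {n : ℕ} (hn : 0 < n) (a : Fin n → ZMod p) : ℤ :=
  ((Finset.univ.filter fun i : Fin n => Even (cycS hn a i)).card : ℤ) -
  ((Finset.univ.filter fun i : Fin n => Odd (cycS hn a i)).card : ℤ)

/-- The reduced tuple `b ∈ (Z_{p/τ})^n` with `b_{2j-1} = (a_{2j-1}-a_1)/τ`,
`b_{2j} = (a_{2j}-a_2)/τ` (differences of integer representatives). -/
noncomputable def reducedTuple (p : ℕ) {n : ℕ} (hn1 : 1 < n) (τ : ℕ) (a : Fin n → ZMod p) :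
    Fin n → ZMod (p / τ) :=
  fun i =>
    (((((a i).val : ℤ) -
        (if Even i.1 then ((a ⟨0, by omega⟩).val : ℤ) else ((a ⟨1, hn1⟩).val : ℤ))) /
      (τ : ℤ) : ℤ) : ZMod (p / τ))

/-- `μ_{p,τ}(a)`: `|μ_{p/τ}(b)|` if `τ_p(a) = τ`, and `∞` otherwise. -/
noncomputable def muTauInv (p : ℕ) {n : ℕ} (hn1 : 1 < n) (τ : ℕ) (a : Fin n → ZMod p) :
    WithTop ℤ :=
  if tauInv p (by omega) a = τ then
    ((|muInv (p / τ) (by omega) (reducedTuple p hn1 τ a)| : ℤ) : WithTop ℤ)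
  else ⊤

/-- The entry at (0-indexed) position `k` of the canonical tuple
`(0, 0, τ, -τ, 2τ, -2τ, …)`. -/
def pairPat (p τ k : ℕ) : ZMod p :=
  if Even k then ((k / 2 : ℕ) : ZMod p) * (τ : ZMod p)
  else -(((k / 2 : ℕ) : ZMod p) * (τ : ZMod p))

/-- The alternating sum `Σ_{i=1}^n (-1)^i x_i` in `ZMod p`. -/
def altSum (p n : ℕ) (x : Fin n → ZMod p) : ZMod p :=
  ∑ i : Fin n, (-1 : ZMod p) ^ (i.1 + 1) * x i

/-- `T_{R→A}(a_1,…,a_n) = (a_1+a_2, a_2+a_3, …, a_{n-1}+a_n, a_n+a_1)`. -/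
def traMap (p : ℕ) {n : ℕ} (hn : 0 < n) (a : Fin n → ZMod p) : Fin n → ZMod p :=
  fun i => a i + a ⟨(i.1 + 1) % n, Nat.mod_lt _ hn⟩

/-- `T_{A→R}(x_1,…,x_n) = (0, c_2, …, c_n)`, `c_j = Σ_{i=1}^{j-1} (-1)^{i+(j-1)} x_i`. -/
def tarMap (p n : ℕ) (x : Fin n → ZMod p) : Fin n → ZMod p :=
  fun k => ∑ i : Fin n, if i.1 < k.1 then (-1 : ZMod p) ^ (i.1 + k.1 + 1) * x i else 0

/-- A single transformation (Op1)^A–(Op3)^A on arc-color tuples. -/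
inductive AStep (p n : ℕ) : (Fin n → ZMod p) → (Fin n → ZMod p) → Prop
  | op1 (hn : 0 < n) (x : Fin n → ZMod p) :
      AStep p n x (fun i => x ⟨(i.1 + 1) % n, Nat.mod_lt _ hn⟩)
  | op2 (c : ZMod p) (x : Fin n → ZMod p) :
      AStep p n x (fun i => 2 * c - x i)
  | op3 (hn : 1 < n) (x : Fin n → ZMod p) :
      AStep p n x (fun i =>
        if i.1 = 0 then x ⟨1, hn⟩
        else if i.1 = 1 then 2 * x ⟨1, hn⟩ - x ⟨0, by omega⟩
        else x i)

/-- `x ~^A y`: related by a finite sequence of (Op1)^A–(Op3)^A. -/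
def AEquiv (p n : ℕ) : (Fin n → ZMod p) → (Fin n → ZMod p) → Prop :=
  Relation.ReflTransGen (AStep p n)

/-- `τ_p^A(x)`: the largest `k ∈ {1,…,p}` dividing `p` with all entries
congruent mod `k`. -/
noncomputable def tauA (p n : ℕ) (x : Fin n → ZMod p) : ℕ :=
  sSup {k : ℕ | 0 < k ∧ k ∣ p ∧ ∀ i j : Fin n, (x i).val ≡ (x j).val [MOD k]}

/-!
Reduced modulo a divisor `k` of `p`, the condition defining `τ_p(a)` says that all entries of
the tuple of cyclic sums `s = T_{R→A}(a)` agree in `ℤ/k`. Each move acts on `s` by a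
permutation or an affine map that preserves this: (Op1) rotates `s`, (Op2) fixes it
(the length being even), (Op3) replaces `s` by `2(a_1 + x) - s`, and (Op4) replaces
`(s_1, s_2, …)` by `(s_2, 2 s_2 - s_1, s_3, …)`.
-/

lemma Function.Surjective.forall_eq_comp_iff {α β γ : Type*} {σ : α → β}
    (hσ : Function.Surjective σ) (c : β → γ) :
    (∀ i j, c (σ i) = c (σ j)) ↔ ∀ i j, c i = c j :=
  ⟨fun h i j => by
    obtain ⟨i', rfl⟩ := hσ i
    obtain ⟨j', rfl⟩ := hσ j
    exact h i' j', fun h _ _ => h _ _⟩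

lemma forall_eq_iff_of_reflect {ι X : Type*} [CommRing X] {c c' : ι → X} {i₀ i₁ : ι}
    (h₀ : c' i₀ = c i₁) (h₁ : c' i₁ = 2 * c i₁ - c i₀)
    (hrest : ∀ i, i ≠ i₀ → i ≠ i₁ → c' i = c i) :
    (∀ i j, c' i = c' j) ↔ ∀ i j, c i = c j := by
  have of_forall_eq {f : ι → X} {z : X} (hf : ∀ i, f i = z) : ∀ i j, f i = f j :=
    fun i j => (hf i).trans (hf j).symm
  constructor
  · intro h
    have h₀₁ : c i₀ = c i₁ := by linear_combination h i₀ i₁ - h₀ + h₁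
    refine of_forall_eq (z := c i₁) fun i => ?_
    by_cases e₀ : i = i₀
    · rw [e₀, h₀₁]
    by_cases e₁ : i = i₁
    · rw [e₁]
    rw [← hrest i e₀ e₁, h i i₀, h₀]
  · intro h
    refine of_forall_eq (z := c i₁) fun i => ?_
    by_cases e₀ : i = i₀
    · rw [e₀, h₀]
    by_cases e₁ : i = i₁
    · rw [e₁, h₁, h i₀ i₁]; ring
    rw [hrest i e₀ e₁, h i i₁]

lemma neg_one_pow_mod_of_even {R : Type*} [Monoid R] [HasDistribNeg R] {n : ℕ}
    (hn : Even n) (m : ℕ) : (-1 : R) ^ (m % n) = (-1) ^ m := by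
  conv_rhs => rw [← Nat.div_add_mod m n, pow_add, pow_mul, hn.neg_one_pow, one_pow, one_mul]

lemma Fin.surjective_succ_mod {n : ℕ} (hn : 0 < n) :
    Function.Surjective fun i : Fin n => (⟨(i.1 + 1) % n, Nat.mod_lt _ hn⟩ : Fin n) := by
  intro j
  refine ⟨⟨(j.1 + n - 1) % n, Nat.mod_lt _ hn⟩, Fin.ext ?_⟩
  have h : j.1 + n - 1 + 1 = j.1 + n := by omega
  simp only [Nat.mod_add_mod, h, Nat.add_mod_right, Nat.mod_eq_of_lt j.2]

section CyclicSums

variable {p n : ℕ}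

lemma traMap_dOp1 (hn : 0 < n) (a : Fin n → ZMod p) (i : Fin n) :
    traMap p hn (dOp1 hn a) i = traMap p hn a ⟨(i.1 + 1) % n, Nat.mod_lt _ hn⟩ := rfl

lemma traMap_dOp2 (hn : 0 < n) (he : Even n) (x : ZMod p) (a : Fin n → ZMod p) :
    traMap p hn (dOp2 hn x a) = traMap p hn a := by
  ext i
  simp only [traMap, dOp2, pow_succ _ ((i.1 + 1) % n), neg_one_pow_mod_of_even he]
  ring

lemma traMap_dOp3 (hn : 0 < n) (x : ZMod p) (a : Fin n → ZMod p) (i : Fin n) :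
    traMap p hn (dOp3 hn x a) i = 2 * (a ⟨0, hn⟩ + x) - traMap p hn a i := by
  simp only [traMap, dOp3]
  ring

lemma traMap_dOp4_zero (hn : 2 < n) (a : Fin n → ZMod p) :
    traMap p (by omega) (dOp4 hn a) ⟨0, by omega⟩ = traMap p (by omega) a ⟨1, by omega⟩ := by
  simp only [traMap, dOp4, zero_ne_one, ↓reduceIte, zero_add, Nat.mod_eq_of_lt,
    show 1 < n by omega, hn]
  ring

lemma traMap_dOp4_one (hn : 2 < n) (a : Fin n → ZMod p) :
    traMap p (by omega) (dOp4 hn a) ⟨1, by omega⟩ =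
      2 * traMap p (by omega) a ⟨1, by omega⟩ - traMap p (by omega) a ⟨0, by omega⟩ := by
  simp only [traMap, dOp4, ↓reduceIte, OfNat.ofNat_ne_one, zero_add, Nat.reduceAdd,
    Nat.mod_eq_of_lt, show 1 < n by omega, hn]
  ring

lemma traMap_dOp4_of_ne (hn : 2 < n) (a : Fin n → ZMod p) {i : Fin n} (h₀ : i.1 ≠ 0)
    (h₁ : i.1 ≠ 1) : traMap p (by omega) (dOp4 hn a) i = traMap p (by omega) a i := by
  have hsucc : (i.1 + 1) % n ≠ 1 := by
    rcases Nat.lt_or_ge (i.1 + 1) n with h | h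
    · rw [Nat.mod_eq_of_lt h]; omega
    · rw [show i.1 + 1 = n by omega, Nat.mod_self]; omega
  simp only [traMap, dOp4, if_neg h₁, if_neg hsucc]

lemma cycS_modEq_iff [NeZero p] {k : ℕ} (hk : k ∣ p) (hn : 0 < n) (a : Fin n → ZMod p)
    (i j : Fin n) :
    cycS hn a i ≡ cycS hn a j [MOD k] ↔
      ZMod.castHom hk (ZMod k) (traMap p hn a i) = ZMod.castHom hk (ZMod k) (traMap p hn a j) := by
  rw [← ZMod.natCast_eq_natCast_iff]
  simp only [cycS, traMap, Nat.cast_add, map_add, ZMod.castHom_apply, ZMod.natCast_val]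

lemma tauInv_eq_of_forall_dvd [NeZero p] {m : ℕ} (hm : 0 < m) (hn : 0 < n)
    (a : Fin m → ZMod p) (b : Fin n → ZMod p)
    (hab : ∀ k (hk : k ∣ p),
      (∀ i j, ZMod.castHom hk (ZMod k) (traMap p hm a i) =
          ZMod.castHom hk (ZMod k) (traMap p hm a j)) ↔
        ∀ i j, ZMod.castHom hk (ZMod k) (traMap p hn b i) =
          ZMod.castHom hk (ZMod k) (traMap p hn b j)) :
    tauInv p hm a = tauInv p hn b := by
  unfold tauInv
  congr 1
  ext k
  refine and_congr_right fun _ => and_congr_right fun hk => ?_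
  simpa only [cycS_modEq_iff hk] using hab k hk

end CyclicSums

namespace DehnStep

variable {p : ℕ} {s t : DehnTuple p}

lemma fst_pos (h : DehnStep p s t) : 0 < s.1 := by
  cases h with
  | op1 hn => exact hn
  | op2 hn => exact hn
  | op3 hn => exact hn
  | op4 hn => exact Nat.zero_lt_of_lt hn

lemma tauInv_eq [NeZero p] (h : DehnStep p s t) (hs : 0 < s.1) (ht : 0 < t.1) :
    tauInv p hs s.2 = tauInv p ht t.2 := by
  refine tauInv_eq_of_forall_dvd _ _ _ _ fun k hk => ?_
  set φ := ZMod.castHom hk (ZMod k)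
  cases h with
  | op1 hn _ a =>
    simp only [traMap_dOp1]
    exact ((Fin.surjective_succ_mod hn).forall_eq_comp_iff (φ ∘ traMap p hn a)).symm
  | op2 hn he x a => rw [traMap_dOp2 hn he]
  | op3 hn _ x a => simp only [traMap_dOp3, map_sub, sub_right_inj]
  | op4 hn _ a =>
    refine (forall_eq_iff_of_reflect (c := φ ∘ traMap p hs a) (i₀ := ⟨0, hs⟩)
      (i₁ := ⟨1, Nat.lt_of_succ_lt hn⟩) ?_ ?_ fun i h₀ h₁ => ?_).symm
    · simp only [Function.comp_apply, traMap_dOp4_zero hn]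
    · simp only [Function.comp_apply, traMap_dOp4_one hn, map_sub, map_mul, map_ofNat]
    · exact congrArg φ (traMap_dOp4_of_ne hn a (Fin.val_ne_iff.2 h₀) (Fin.val_ne_iff.2 h₁))

end DehnStep

lemma DehnEquiv.tauInv_eq {p : ℕ} [NeZero p] {s t : DehnTuple p} (h : DehnEquiv p s t)
    (hs : 0 < s.1) (ht : 0 < t.1) : tauInv p hs s.2 = tauInv p ht t.2 := by
  induction h with
  | refl => rfl
  | tail _ step ih => exact (ih step.fst_pos).trans (step.tauInv_eq _ ht)

theorem tauInv_invariant_general (p : ℕ) (hp : 2 ≤ p) (m n : ℕ)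
    (hm : 0 < m) (hn : 0 < n)
    (a : Fin m → ZMod p) (b : Fin n → ZMod p)
    (h : DehnEquiv p ⟨m, a⟩ ⟨n, b⟩) :
    tauInv p hm a = tauInv p hn b :=
  have : NeZero p := ⟨by omega⟩
  h.tauInv_eq hm hn

/-- `τ_p` is an invariant of `~`. -/
theorem tauInv_invariant (p : ℕ) (hp : 2 ≤ p) (m n : ℕ)
    (hm : 0 < m) (hme : Even m) (hn : 0 < n) (hne : Even n)
    (a : Fin m → ZMod p) (b : Fin n → ZMod p)
    (h : DehnEquiv p ⟨m, a⟩ ⟨n, b⟩) :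
    tauInv p hm a = tauInv p hn b :=
  tauInv_invariant_general p hp m n hm hn a b h
end

section
/- Let p ≥ 2 be even and let a, b ∈ U_p with a ~ b. Then ε_p(a) = ε_p(b); that is, ε_p is an invariant of the equivalence relation ~. -/
open scoped Classical

/-!
`ε_p(a)` only records which parities occur among the cyclic sums `a_i + a_{i+1}`, and for even `p`
the parity of an element of `Z_p` is well defined, so these parities can be computed in `Z_p`.
Each operation permutes the parities: (Op1) rotates them; (Op2) leaves the sums unchanged, since
`n` is even and so the signs `(-1)^i` of consecutive entries cancel, also across `a_n + a_1`;
(Op3) turns each sum `s` into `2(a_1 + a) - s ≡ s`; and (Op4) swaps the first two sums modulo 2.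
-/

lemma val_finRotate {n : ℕ} (i : Fin n) : (finRotate n i : ℕ) = (i + 1) % n := by
  have : NeZero n := i.neZero
  rw [finRotate_apply, Fin.val_add, Fin.val_one', Nat.add_mod_mod]

lemma neg_one_pow_add_neg_one_pow_finRotate {R : Type*} [Ring R] {n : ℕ} (he : Even n)
    (i : Fin n) : (-1 : R) ^ (i.1 + 1) + (-1) ^ ((finRotate n i).1 + 1) = 0 := by
  rw [val_finRotate]
  rcases (Nat.succ_le_of_lt i.2).lt_or_eq with hlt | heq
  · rw [Nat.mod_eq_of_lt hlt, pow_succ (-1 : R) (i.1 + 1), mul_neg_one, add_neg_cancel]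
  · rw [← Nat.succ_eq_add_one, heq, Nat.mod_self, he.neg_one_pow, pow_one, add_neg_cancel]

section

variable {p : ℕ}

lemma cycS_eq {n : ℕ} (hn : 0 < n) (a : Fin n → ZMod p) (i : Fin n) :
    cycS hn a i = (a i).val + (a (finRotate n i)).val := by
  simp only [cycS, ← val_finRotate, Fin.eta]

lemma dOp1_eq_comp {n : ℕ} (hn : 0 < n) (a : Fin n → ZMod p) : dOp1 hn a = a ∘ finRotate n := by
  funext i
  simp only [dOp1, ← val_finRotate, Fin.eta, Function.comp_apply]

def cycSumParities {n : ℕ} (hn : 0 < n) (a : Fin n → ZMod p) : Set (ZMod 2) :=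
  Set.range fun i => (cycS hn a i : ZMod 2)

lemma forall_even_cycS_iff {n : ℕ} (hn : 0 < n) (a : Fin n → ZMod p) :
    (∀ i, Even (cycS hn a i)) ↔ cycSumParities hn a ⊆ {0} := by
  simp only [cycSumParities, Set.range_subset_iff, Set.mem_singleton_iff,
    ZMod.natCast_eq_zero_iff_even]

lemma forall_odd_cycS_iff {n : ℕ} (hn : 0 < n) (a : Fin n → ZMod p) :
    (∀ i, Odd (cycS hn a i)) ↔ cycSumParities hn a ⊆ {1} := by
  simp only [cycSumParities, Set.range_subset_iff, Set.mem_singleton_iff,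
    ZMod.natCast_eq_one_iff_odd]

lemma epsInv_eq_of_cycSumParities_eq {m n : ℕ} {hm : 0 < m} {hn : 0 < n}
    {a : Fin m → ZMod p} {b : Fin n → ZMod p}
    (h : cycSumParities hm a = cycSumParities hn b) : epsInv p hm a = epsInv p hn b := by
  simp only [epsInv, forall_even_cycS_iff, forall_odd_cycS_iff, h]

lemma cycS_cast_two [NeZero p] (hp : 2 ∣ p) {n : ℕ} (hn : 0 < n) (a : Fin n → ZMod p)
    (i : Fin n) :
    (cycS hn a i : ZMod 2) = ZMod.castHom hp (ZMod 2) (a i + a (finRotate n i)) := by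
  rw [cycS_eq, Nat.cast_add, map_add, ZMod.castHom_apply, ZMod.castHom_apply,
    ZMod.natCast_val, ZMod.natCast_val]

lemma cycS_dOp1 {n : ℕ} (hn : 0 < n) (a : Fin n → ZMod p) (i : Fin n) :
    cycS hn (dOp1 hn a) i = cycS hn a (finRotate n i) := by
  rw [cycS_eq, cycS_eq, dOp1_eq_comp, Function.comp_apply, Function.comp_apply]

lemma cycSumParities_dOp1 {n : ℕ} (hn : 0 < n) (a : Fin n → ZMod p) :
    cycSumParities hn (dOp1 hn a) = cycSumParities hn a := by
  simp only [cycSumParities, cycS_dOp1]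
  exact EquivLike.range_comp (fun i => (cycS hn a i : ZMod 2)) (finRotate n)

lemma dOp2_add_dOp2_finRotate {n : ℕ} (hn : 0 < n) (he : Even n) (x : ZMod p)
    (a : Fin n → ZMod p) (i : Fin n) :
    dOp2 hn x a i + dOp2 hn x a (finRotate n i) = a i + a (finRotate n i) := by
  have hsign := neg_one_pow_add_neg_one_pow_finRotate (R := ZMod p) he i
  simp only [dOp2]
  linear_combination (a ⟨0, hn⟩ - x) * hsign

lemma cycSumParities_dOp2 [NeZero p] (hp : 2 ∣ p) {n : ℕ} (hn : 0 < n) (he : Even n)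
    (x : ZMod p) (a : Fin n → ZMod p) :
    cycSumParities hn (dOp2 hn x a) = cycSumParities hn a := by
  simp only [cycSumParities, cycS_cast_two hp, dOp2_add_dOp2_finRotate hn he]

lemma dOp3_add_dOp3 {n : ℕ} (hn : 0 < n) (x : ZMod p) (a : Fin n → ZMod p) (i j : Fin n) :
    dOp3 hn x a i + dOp3 hn x a j = 2 * (a ⟨0, hn⟩ + x) - (a i + a j) := by
  simp only [dOp3]
  ring

lemma cycSumParities_dOp3 [NeZero p] (hp : 2 ∣ p) {n : ℕ} (hn : 0 < n) (x : ZMod p)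
    (a : Fin n → ZMod p) :
    cycSumParities hn (dOp3 hn x a) = cycSumParities hn a := by
  have two_mul_sub : ∀ y z : ZMod 2, 2 * y - z = z := by decide
  simp only [cycSumParities, cycS_cast_two hp, dOp3_add_dOp3, map_sub, map_mul, map_ofNat,
    two_mul_sub]

lemma finRotate_mk_of_lt {n k : ℕ} (hk : k + 1 < n) :
    finRotate n ⟨k, by omega⟩ = ⟨k + 1, hk⟩ :=
  Fin.ext <| (val_finRotate _).trans (Nat.mod_eq_of_lt hk)

lemma cycS_dOp4_cast_two [NeZero p] (hp : 2 ∣ p) {n : ℕ} (hn : 2 < n) (a : Fin n → ZMod p)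
    (i : Fin n) :
    (cycS (by omega) (dOp4 hn a) i : ZMod 2) =
      cycS (by omega) a (Equiv.swap ⟨0, by omega⟩ ⟨1, by omega⟩ i) := by
  simp only [cycS_cast_two hp]
  obtain ⟨_ | _ | k, hk⟩ := i
  · rw [Equiv.swap_apply_left, finRotate_mk_of_lt (by omega), finRotate_mk_of_lt hn]
    simp only [dOp4, zero_ne_one, ite_true, ite_false]
    congr 1
    ring
  · rw [Equiv.swap_apply_right, finRotate_mk_of_lt hn, finRotate_mk_of_lt (by omega)]
    have hsum : dOp4 hn a ⟨1, by omega⟩ + dOp4 hn a ⟨2, hn⟩ =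
        a ⟨0, by omega⟩ + a ⟨1, by omega⟩ + 2 * (a ⟨2, hn⟩ - a ⟨0, by omega⟩) := by
      simp only [dOp4, OfNat.ofNat_ne_one, ite_true, ite_false]
      ring
    have two_mul_eq_zero : ∀ y : ZMod 2, 2 * y = 0 := by decide
    rw [hsum, map_add _ _ (2 * _), map_mul, map_ofNat, two_mul_eq_zero, add_zero]
  · have hrot : (finRotate n ⟨k + 2, hk⟩ : ℕ) ≠ 1 := by
      rw [val_finRotate]
      rcases (Nat.succ_le_of_lt hk).lt_or_eq with hlt | heq
      · rw [Nat.mod_eq_of_lt hlt]; omega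
      · rw [← Nat.succ_eq_add_one, heq, Nat.mod_self]; omega
    rw [Equiv.swap_apply_of_ne_of_ne (by simp) (by simp)]
    simp only [dOp4, if_neg hrot]
    rfl

lemma cycSumParities_dOp4 [NeZero p] (hp : 2 ∣ p) {n : ℕ} (hn : 2 < n) (a : Fin n → ZMod p) :
    cycSumParities (by omega) (dOp4 hn a) = cycSumParities (by omega) a := by
  simp only [cycSumParities, cycS_dOp4_cast_two hp]
  exact EquivLike.range_comp (fun i => (cycS (by omega) a i : ZMod 2)) _

lemma DehnStep.fst_pos_s3 {s t : DehnTuple p} (hst : DehnStep p s t) : 0 < s.1 := by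
  cases hst with
  | op4 hn => exact Nat.zero_lt_of_lt hn
  | _ hn => exact hn

lemma DehnStep.cycSumParities_eq [NeZero p] (hp : 2 ∣ p) {s t : DehnTuple p}
    (hst : DehnStep p s t) (hs : 0 < s.1) (ht : 0 < t.1) :
    cycSumParities hs s.2 = cycSumParities ht t.2 := by
  cases hst with
  | op1 hn _ a => exact (cycSumParities_dOp1 hn a).symm
  | op2 hn he x a => exact (cycSumParities_dOp2 hp hn he x a).symm
  | op3 hn _ x a => exact (cycSumParities_dOp3 hp hn x a).symm
  | op4 hn _ a => exact (cycSumParities_dOp4 hp hn a).symm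

lemma DehnEquiv.cycSumParities_eq [NeZero p] (hp : 2 ∣ p) {s t : DehnTuple p}
    (hst : DehnEquiv p s t) (hs : 0 < s.1) (ht : 0 < t.1) :
    cycSumParities hs s.2 = cycSumParities ht t.2 := by
  induction hst with
  | refl => rfl
  | tail _ hstep ih => exact (ih hstep.fst_pos_s3).trans (hstep.cycSumParities_eq hp _ ht)

end

theorem epsInv_invariant_general (p : ℕ) (hp : 2 ≤ p) (hpe : Even p) (m n : ℕ)
    (hm : 0 < m) (hn : 0 < n)
    (a : Fin m → ZMod p) (b : Fin n → ZMod p)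
    (h : DehnEquiv p ⟨m, a⟩ ⟨n, b⟩) :
    epsInv p hm a = epsInv p hn b :=
  have : NeZero p := ⟨by omega⟩
  epsInv_eq_of_cycSumParities_eq (h.cycSumParities_eq hpe.two_dvd hm hn)

/-- for even `p`, `ε_p` is an invariant of `~`. -/
theorem epsInv_invariant (p : ℕ) (hp : 2 ≤ p) (hpe : Even p) (m n : ℕ)
    (hm : 0 < m) (hme : Even m) (hn : 0 < n) (hne : Even n)
    (a : Fin m → ZMod p) (b : Fin n → ZMod p)
    (h : DehnEquiv p ⟨m, a⟩ ⟨n, b⟩) :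
    epsInv p hm a = epsInv p hn b :=
  epsInv_invariant_general p hp hpe m n hm hn a b h
end

section
/- Let p ≥ 3 be odd. Then any two elements of U_{p,2} = Z_p^2 are equivalent under ~; in other words, U_{p,2}/~ consists of exactly one equivalence class, and every a ∈ Z_p^2 satisfies a ~ (0,0). -/
open scoped Classical

/-! On pairs, (Op3) with parameter `x` followed by (Op2) with parameter `y` sends `(a₀, a₁)` to
`(y, a₀ - a₁ + 2x - y)`. For odd `p` the element `2` is a unit of `ZMod p`, so `x` and `y` can be
chosen to hit any target pair. -/

lemma ZMod.isUnit_two_of_odd {p : ℕ} (hp : Odd p) : IsUnit (2 : ZMod p) := by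
  simpa using (ZMod.isUnit_iff_coprime 2 p).mpr hp.coprime_two_left

lemma dOp2_dOp3_fin_two {p : ℕ} (x y : ZMod p) (a : Fin 2 → ZMod p) :
    dOp2 two_pos y (dOp3 two_pos x a) = ![y, a 0 - a 1 + 2 * x - y] := by
  ext i
  fin_cases i
  · simp [dOp2, dOp3]
  · simp [dOp2, dOp3]; ring

lemma dehnEquiv_fin_two_of_two_mul_eq {p : ℕ} {a b : Fin 2 → ZMod p} {x : ZMod p}
    (hx : b 0 + b 1 - a 0 + a 1 = 2 * x) : DehnEquiv p ⟨2, a⟩ ⟨2, b⟩ := by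
  have hb : dOp2 two_pos (b 0) (dOp3 two_pos x a) = b := by
    rw [dOp2_dOp3_fin_two]
    ext i
    fin_cases i
    · rfl
    · simp only [Fin.mk_one, Matrix.cons_val_one, Matrix.cons_val_fin_one]
      linear_combination -hx
  rw [← hb]
  exact .tail (.single (.op3 two_pos even_two x a)) (.op2 two_pos even_two (b 0) _)

theorem dehnEquiv_fin_two_of_odd {p : ℕ} (hp : Odd p) (a b : Fin 2 → ZMod p) :
    DehnEquiv p ⟨2, a⟩ ⟨2, b⟩ :=
  have ⟨_, hx⟩ := (ZMod.isUnit_two_of_odd hp).dvd (a := b 0 + b 1 - a 0 + a 1)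
  dehnEquiv_fin_two_of_two_mul_eq hx

theorem classification_n2_odd_general (p : ℕ) (hpo : Odd p) :
    (∀ a b : Fin 2 → ZMod p, DehnEquiv p ⟨2, a⟩ ⟨2, b⟩) ∧
    (∀ a : Fin 2 → ZMod p, DehnEquiv p ⟨2, a⟩ ⟨2, ![0, 0]⟩) :=
  ⟨dehnEquiv_fin_two_of_odd hpo, fun a => dehnEquiv_fin_two_of_odd hpo a _⟩

/-- for odd `p ≥ 3`, any two elements of `U_{p,2} = (ZMod p)^2`
are equivalent, and every element is equivalent to `(0,0)`. -/
theorem classification_n2_odd (p : ℕ) (hp : 3 ≤ p) (hpo : Odd p) :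
    (∀ a b : Fin 2 → ZMod p, DehnEquiv p ⟨2, a⟩ ⟨2, b⟩) ∧
    (∀ a : Fin 2 → ZMod p, DehnEquiv p ⟨2, a⟩ ⟨2, ![0, 0]⟩) :=
  classification_n2_odd_general p hpo
end

section
/- Let p ≥ 2 be even. On Z_p^2 the invariant ε_p takes only the values 0 and 1, and for a, b ∈ U_{p,2} = Z_p^2 one has a ~ b if and only if ε_p(a) = ε_p(b). Hence U_{p,2}/~ = { η_0, η_1 }, where η_ε = { a ∈ Z_p^2 : ε_p(a) = ε }, and these two classes are nonempty and distinct. -/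
open scoped Classical

/-! On pairs both cyclic sums equal `a₀ + a₁`, so `ε_p(a)` is the parity of `a₀ + a₁`, read
in `ZMod 2` through the ring hom `ZMod p → ZMod 2` (this is where `p` even is needed). (Op1) and
(Op2) preserve `a₀ + a₁` and (Op3) replaces it by `a₀ - a₁ + 2x`, so the parity is invariant.
Conversely, if `a₀ + a₁ + b₀ + b₁ = 2x`, then (Op2), (Op3), (Op1), (Op2) lead from `a` to `b`. -/

section FinTwo

variable {p : ℕ}

theorem ZMod.natCast_val_eq_castHom_two (hd : 2 ∣ p) (z : ZMod p) :
    ((z.val : ℕ) : ZMod 2) = ZMod.castHom hd (ZMod 2) z := by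
  rcases p.eq_zero_or_pos with rfl | hp
  · exact ZMod.natAbs_mod_two z
  · have : NeZero p := ⟨hp.ne'⟩
    simp [ZMod.natCast_val]

theorem exists_add_self_eq_of_castHom_two_eq_zero (hd : 2 ∣ p) {z : ZMod p}
    (hz : ZMod.castHom hd (ZMod 2) z = 0) : ∃ x, x + x = z := by
  obtain ⟨k, rfl⟩ := ZMod.intCast_surjective z
  rw [map_intCast, ZMod.intCast_zmod_eq_zero_iff_dvd] at hz
  obtain ⟨m, rfl⟩ := hz
  exact ⟨m, by push_cast; ring⟩

def sumParity (hd : 2 ∣ p) (a : Fin 2 → ZMod p) : ZMod 2 :=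
  ZMod.castHom hd (ZMod 2) (a 0 + a 1)

theorem cycS_fin_two (a : Fin 2 → ZMod p) (i : Fin 2) :
    cycS two_pos a i = (a 0).val + (a 1).val := by
  fin_cases i
  · rfl
  · exact add_comm _ _

theorem even_val_add_val_iff_sumParity_eq_zero (hd : 2 ∣ p) (a : Fin 2 → ZMod p) :
    Even ((a 0).val + (a 1).val) ↔ sumParity hd a = 0 := by
  rw [even_iff_two_dvd, ← ZMod.natCast_eq_zero_iff, Nat.cast_add, sumParity, map_add,
    ZMod.natCast_val_eq_castHom_two, ZMod.natCast_val_eq_castHom_two]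

theorem epsInv_fin_two (hd : 2 ∣ p) (a : Fin 2 → ZMod p) :
    epsInv p two_pos a = ((sumParity hd a).val : WithTop ℕ) := by
  have hpar := even_val_add_val_iff_sumParity_eq_zero hd a
  simp only [epsInv, cycS_fin_two, forall_const]
  by_cases h : Even ((a 0).val + (a 1).val)
  · rw [if_pos h, hpar.1 h, ZMod.val_zero, Nat.cast_zero]
  · rw [if_neg h, if_pos (Nat.not_even_iff_odd.1 h)]
    have h1 : sumParity hd a = 1 := by
      generalize sumParity hd a = z at hpar
      fin_cases z
      · exact absurd (hpar.2 rfl) h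
      · rfl
    rw [h1, ZMod.val_one, Nat.cast_one]

theorem DehnStep.exists_fin_two_sumParity_eq (hd : 2 ∣ p) {a : Fin 2 → ZMod p}
    {t : DehnTuple p} (h : DehnStep p ⟨2, a⟩ t) :
    ∃ b : Fin 2 → ZMod p, t = ⟨2, b⟩ ∧ sumParity hd b = sumParity hd a := by
  cases h with
  | op1 hn => exact ⟨_, rfl, congrArg (ZMod.castHom hd (ZMod 2)) (add_comm _ _)⟩
  | op2 hn _ x =>
    refine ⟨_, rfl, congrArg (ZMod.castHom hd (ZMod 2)) ?_⟩
    simp only [dOp2, Fin.val_zero, Fin.val_one, Fin.zero_eta]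
    ring
  | op3 hn _ x =>
    refine ⟨_, rfl, ?_⟩
    simp only [sumParity, dOp3, Fin.zero_eta, map_add, map_sub]
    linear_combination (ZMod.castHom hd (ZMod 2) x - ZMod.castHom hd (ZMod 2) (a 1)) *
      CharTwo.two_eq_zero (R := ZMod 2)
  | op4 hn => omega

theorem DehnEquiv.sumParity_eq (hd : 2 ∣ p) {a b : Fin 2 → ZMod p}
    (h : DehnEquiv p ⟨2, a⟩ ⟨2, b⟩) : sumParity hd b = sumParity hd a := by
  suffices ∀ t, DehnEquiv p ⟨2, a⟩ t →
      ∃ c : Fin 2 → ZMod p, t = ⟨2, c⟩ ∧ sumParity hd c = sumParity hd a by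
    obtain ⟨c, hbc, hc⟩ := this _ h
    obtain rfl : b = c := eq_of_heq (Sigma.mk.inj hbc).2
    exact hc
  intro t ht
  induction ht with
  | refl => exact ⟨a, rfl, rfl⟩
  | tail _ hstep ih =>
    obtain ⟨c, rfl, hc⟩ := ih
    obtain ⟨d, rfl, hd'⟩ := hstep.exists_fin_two_sumParity_eq hd
    exact ⟨d, rfl, hd'.trans hc⟩

theorem dehnEquiv_fin_two_swap (u v : ZMod p) : DehnEquiv p ⟨2, ![u, v]⟩ ⟨2, ![v, u]⟩ := by
  have h : dOp1 two_pos ![u, v] = ![v, u] := by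
    ext i
    fin_cases i <;> rfl
  exact h ▸ .single (.op1 two_pos even_two _)

theorem dehnEquiv_fin_two_op2 (x u v : ZMod p) :
    DehnEquiv p ⟨2, ![u, v]⟩ ⟨2, ![x, u + v - x]⟩ := by
  have h : dOp2 two_pos x ![u, v] = ![x, u + v - x] := by
    ext i
    fin_cases i
    · simp [dOp2]
    · simp [dOp2]
      ring
  exact h ▸ .single (.op2 two_pos even_two x _)

theorem dehnEquiv_fin_two_op3 (x u v : ZMod p) :
    DehnEquiv p ⟨2, ![u, v]⟩ ⟨2, ![x, u - v + x]⟩ := by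
  have h : dOp3 two_pos x ![u, v] = ![x, u - v + x] := by
    ext i
    fin_cases i <;> simp [dOp3]
  exact h ▸ .single (.op3 two_pos even_two x _)

theorem dehnEquiv_fin_two_of_sumParity_eq (hd : 2 ∣ p) {a b : Fin 2 → ZMod p}
    (h : sumParity hd a = sumParity hd b) : DehnEquiv p ⟨2, a⟩ ⟨2, b⟩ := by
  obtain ⟨x, hx⟩ : ∃ x, x + x = (a 0 + a 1) + (b 0 + b 1) :=
    exists_add_self_eq_of_castHom_two_eq_zero hd
      (by rw [map_add, ← sumParity, h, sumParity, CharTwo.add_self_eq_zero])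
  have hb : ![b 0, 0 - (a 0 + a 1 - 0) + x + x - b 0] = b := by
    ext i
    fin_cases i
    · rfl
    · simp only [Fin.mk_one, Matrix.cons_val_one, Matrix.cons_val_zero]
      linear_combination hx
  rw [← FinVec.etaExpand_eq a, ← hb]
  -- `(a₀, a₁) → (0, s) → (x, x - s) → (x - s, x) → (b₀, 2x - s - b₀)` with `s = a₀ + a₁`
  exact (((dehnEquiv_fin_two_op2 0 _ _).trans (dehnEquiv_fin_two_op3 x _ _)).trans
    (dehnEquiv_fin_two_swap _ _)).trans (dehnEquiv_fin_two_op2 (b 0) _ _)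

end FinTwo

/-- for even `p`, on `(ZMod p)^2` the invariant `ε_p` takes only
the values `0` and `1`, two tuples are equivalent iff they have the same
`ε_p`, and both classes `η_0, η_1` are nonempty (hence distinct). -/
theorem classification_n2_even (p : ℕ) (hpe : Even p) :
    (∀ a : Fin 2 → ZMod p,
        epsInv p (by norm_num) a = 0 ∨ epsInv p (by norm_num) a = 1) ∧
    (∀ a b : Fin 2 → ZMod p,
        DehnEquiv p ⟨2, a⟩ ⟨2, b⟩ ↔
          epsInv p (by norm_num) a = epsInv p (by norm_num) b) ∧
    (∃ a : Fin 2 → ZMod p, epsInv p (by norm_num) a = 0) ∧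
    (∃ a : Fin 2 → ZMod p, epsInv p (by norm_num) a = 1) := by
  have hd : 2 ∣ p := hpe.two_dvd
  refine ⟨fun a => ?_, fun a b => ?_, ⟨![0, 0], ?_⟩, ⟨![0, 1], ?_⟩⟩
  · have := ZMod.val_lt (sumParity hd a)
    rw [epsInv_fin_two hd]
    norm_cast
    omega
  · rw [epsInv_fin_two hd, epsInv_fin_two hd, Nat.cast_inj, (ZMod.val_injective 2).eq_iff]
    exact ⟨fun h => (h.sumParity_eq hd).symm, dehnEquiv_fin_two_of_sumParity_eq hd⟩
  · simp [epsInv_fin_two hd, sumParity]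
  · simp [epsInv_fin_two hd, sumParity, ZMod.cast_one hd, ZMod.val_one]
end

section
/- Let p ≥ 2 be even and let a ∈ Z_p^2. If ε_p(a) = 0 then a ~ (0,0), and if ε_p(a) = 1 then a ~ (0,1). -/
open scoped Classical

/-! For `n = 2`, (Op2) with `x = 0`, then (Op3) with an arbitrary `x`, then (Op2) with `x = 0`
again turn `(a₀, a₁)` into `(0, 2x - (a₀ + a₁))`. So everything hinges on the parity of
`a₀ + a₁`, which `ε_p` reads off from the integer representatives. -/

namespace ZMod

theorem even_add_of_even_val_add {p : ℕ} {a b : ZMod p} (h : Even (a.val + b.val)) :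
    Even (a + b) := by
  rcases p with _ | p
  · change Even (a.natAbs + b.natAbs) at h
    exact Int.even_add.mpr <|
      Int.natAbs_even.symm.trans <| (Nat.even_add.mp h).trans Int.natAbs_even
  · rw [← natCast_zmod_val a, ← natCast_zmod_val b, ← Nat.cast_add]
    exact h.natCast

theorem odd_add_of_odd_val_add {p : ℕ} {a b : ZMod p} (h : Odd (a.val + b.val)) :
    Odd (a + b) := by
  rcases p with _ | p
  · change Odd (a.natAbs + b.natAbs) at h
    exact Int.odd_add.mpr <|
      Int.natAbs_odd.symm.trans <| (Nat.odd_add.mp h).trans Int.natAbs_even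
  · rw [← natCast_zmod_val a, ← natCast_zmod_val b, ← Nat.cast_add]
    exact h.natCast

end ZMod

theorem even_cycS_of_epsInv_eq_zero {p n : ℕ} {hn : 0 < n} {a : Fin n → ZMod p}
    (h : epsInv p hn a = 0) (i : Fin n) : Even (cycS hn a i) := by
  unfold epsInv at h
  split_ifs at h with heven hodd
  exacts [heven i, absurd h one_ne_zero, absurd h WithTop.top_ne_zero]

theorem odd_cycS_of_epsInv_eq_one {p n : ℕ} {hn : 0 < n} {a : Fin n → ZMod p}
    (h : epsInv p hn a = 1) (i : Fin n) : Odd (cycS hn a i) := by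
  unfold epsInv at h
  split_ifs at h with heven hodd
  exacts [absurd h zero_ne_one, hodd i, absurd h WithTop.top_ne_one]

theorem cycS_two_zero {p : ℕ} (a : Fin 2 → ZMod p) :
    cycS (by norm_num) a 0 = (a 0).val + (a 1).val := rfl

theorem dehnEquiv_two_zero_two_mul_sub {p : ℕ} (a : Fin 2 → ZMod p) (x : ZMod p) :
    DehnEquiv p ⟨2, a⟩ ⟨2, ![0, 2 * x - (a 0 + a 1)]⟩ := by
  have hn : 0 < 2 := by norm_num
  have he : Even 2 := even_two
  have hres : dOp2 hn 0 (dOp3 hn x (dOp2 hn 0 a)) = ![0, 2 * x - (a 0 + a 1)] := by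
    funext i
    fin_cases i <;> simp [dOp2, dOp3]
    ring
  rw [← hres]
  exact .head (.op2 hn he 0 a) <| .head (.op3 hn he x _) <| .single (.op2 hn he 0 _)

theorem dehnEquiv_two_zero_zero_of_even {p : ℕ} {a : Fin 2 → ZMod p} (h : Even (a 0 + a 1)) :
    DehnEquiv p ⟨2, a⟩ ⟨2, ![0, 0]⟩ := by
  obtain ⟨r, hr⟩ := h
  simpa [hr, two_mul] using dehnEquiv_two_zero_two_mul_sub a r

theorem dehnEquiv_two_zero_one_of_odd {p : ℕ} {a : Fin 2 → ZMod p} (h : Odd (a 0 + a 1)) :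
    DehnEquiv p ⟨2, a⟩ ⟨2, ![0, 1]⟩ := by
  obtain ⟨k, hk⟩ := h
  have hone : 2 * (k + 1) - (a 0 + a 1) = 1 := by rw [hk]; ring
  simpa [hone] using dehnEquiv_two_zero_two_mul_sub a (k + 1)

/-- for even `p` and `a ∈ (ZMod p)^2`: if `ε_p(a) = 0` then
`a ~ (0,0)`, and if `ε_p(a) = 1` then `a ~ (0,1)`. -/
theorem representative_n2_even (p : ℕ)
    (a : Fin 2 → ZMod p) :
    (epsInv p (by norm_num) a = 0 → DehnEquiv p ⟨2, a⟩ ⟨2, ![0, 0]⟩) ∧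
    (epsInv p (by norm_num) a = 1 → DehnEquiv p ⟨2, a⟩ ⟨2, ![0, 1]⟩) := by
  constructor
  · intro h
    apply dehnEquiv_two_zero_zero_of_even
    apply ZMod.even_add_of_even_val_add
    simpa only [cycS_two_zero] using even_cycS_of_epsInv_eq_zero h 0
  · intro h
    apply dehnEquiv_two_zero_one_of_odd
    apply ZMod.odd_add_of_odd_val_add
    simpa only [cycS_two_zero] using odd_cycS_of_epsInv_eq_one h 0
end

section
/- Let p ≥ 2 be even, let n be an even positive integer, and let x = (x_1,...,x_n) ∈ Z_p^n satisfy 2·Σ_{i=1}^n (-1)^i x_i = 0 in Z_p. If τ = τ_p^A(x) is even and p/τ is odd, then κ_p^A(x) = Σ_{i=1}^n (-1)^i x_i = 0 in Z_p (rather than p/2). -/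
open scoped Classical

/-! Reducing modulo `τ = τ_p^A(x)`, all entries of `x` coincide, so the alternating sum of an even
number of them vanishes: `τ ∣ κ`. Together with `p ∣ 2κ` and `p = τ · (p / τ)` with `p / τ` odd,
this forces `p ∣ κ`. -/

theorem sum_neg_one_pow_mul_eq_zero {R : Type*} [Ring R] {n : ℕ} (hn : Even n) {f : Fin n → R}
    (hf : ∀ i j, f i = f j) : ∑ i : Fin n, (-1 : R) ^ (i.1 + 1) * f i = 0 := by
  cases n with
  | zero => simp
  | succ m =>
    rw [Finset.sum_congr rfl fun i _ => by rw [hf i 0], ← Finset.sum_mul,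
      Fin.sum_univ_eq_sum_range (fun i => (-1 : R) ^ (i + 1))]
    simp only [pow_succ, mul_neg_one, Finset.sum_neg_distrib, neg_one_geom_sum, if_pos hn,
      neg_zero, zero_mul]

theorem tauA_dvd_and_modEq {p n : ℕ} (hp : p ≠ 0) (x : Fin n → ZMod p) :
    tauA p n x ∣ p ∧ ∀ i j : Fin n, (x i).val ≡ (x j).val [MOD tauA p n x] := by
  let S := {k : ℕ | 0 < k ∧ k ∣ p ∧ ∀ i j : Fin n, (x i).val ≡ (x j).val [MOD k]}
  have hS : S.Nonempty := ⟨1, one_pos, one_dvd p, fun _ _ => Nat.modEq_one⟩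
  have hbdd : BddAbove S := ⟨p, fun _ hk => Nat.le_of_dvd (Nat.pos_of_ne_zero hp) hk.2.1⟩
  exact (Nat.sSup_mem hS hbdd).2

theorem tauA_dvd_altSum_val {p n : ℕ} (hp : p ≠ 0) (hn : Even n) (x : Fin n → ZMod p) :
    tauA p n x ∣ (altSum p n x).val := by
  have : NeZero p := ⟨hp⟩
  obtain ⟨hdvd, hmod⟩ := tauA_dvd_and_modEq hp x
  let π := ZMod.castHom hdvd (ZMod (tauA p n x))
  have hπ : ∀ a : ZMod p, π a = (a.val : ZMod (tauA p n x)) := fun a => (ZMod.natCast_val a).symm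
  rw [← ZMod.natCast_eq_zero_iff, ← hπ, altSum, map_sum]
  simp only [map_mul, map_pow, map_neg, map_one]
  exact sum_neg_one_pow_mul_eq_zero hn fun i j => by
    rw [hπ, hπ, ZMod.natCast_eq_natCast_iff]
    exact hmod i j

theorem Nat.mul_dvd_of_dvd_two_mul {t q m : ℕ} (hq : Odd q) (ht : t ∣ m)
    (h2 : t * q ∣ 2 * m) : t * q ∣ m := by
  obtain ⟨k, rfl⟩ := ht
  rcases eq_or_ne t 0 with rfl | ht0
  · simp
  have hqk : q ∣ 2 * k :=
    Nat.dvd_of_mul_dvd_mul_left (Nat.pos_of_ne_zero ht0) (by rwa [mul_left_comm] at h2)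
  exact Nat.mul_dvd_mul_left t (hq.coprime_two_right.dvd_of_dvd_mul_left hqk)

theorem kappa_eq_zero_of_beta_general (p n : ℕ) (hne : Even n) (x : Fin n → ZMod p)
    (h2 : 2 * altSum p n x = 0) (hqo : Odd (p / tauA p n x)) :
    altSum p n x = 0 := by
  have hp : p ≠ 0 := by
    rintro rfl
    simp at hqo
  have : NeZero p := ⟨hp⟩
  have hp_factor : tauA p n x * (p / tauA p n x) = p :=
    Nat.mul_div_cancel' (tauA_dvd_and_modEq hp x).1
  have h2dvd : p ∣ 2 * (altSum p n x).val := by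
    rw [← ZMod.natCast_eq_zero_iff]
    push_cast
    rwa [ZMod.natCast_zmod_val]
  have hdvd := Nat.mul_dvd_of_dvd_two_mul hqo (tauA_dvd_altSum_val hp hne x) (by rwa [hp_factor])
  rw [hp_factor] at hdvd
  rwa [← ZMod.natCast_eq_zero_iff, ZMod.natCast_zmod_val] at hdvd

/-- for even `p`, even `n > 0` and `x ∈ (ZMod p)^n` with
`2·Σ (-1)^i x_i = 0`, if `τ = τ_p^A(x)` is even and `p/τ` is odd, then
`κ_p^A(x) = Σ (-1)^i x_i = 0` in `ZMod p`. -/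
theorem kappa_eq_zero_of_beta (p n : ℕ) (hp : 2 ≤ p) (hpe : Even p)
    (hn : 0 < n) (hne : Even n) (x : Fin n → ZMod p)
    (h2 : 2 * altSum p n x = 0)
    (hτe : Even (tauA p n x)) (hqo : Odd (p / tauA p n x)) :
    altSum p n x = 0 :=
  kappa_eq_zero_of_beta_general p n hne x h2 hqo
end

section
/- Let p ≥ 2. The alternating set A_p = ⋃_{n even} A_{p,n}, where A_{p,n} = { (a_1,...,a_n) ∈ Z_p^n : a_i = a_1 for all odd i and a_i = a_2 for all even i }, is an R-palette for Dehn p-colorings; that is, A_p is closed under the operations (i)–(iv) in the definition of an R-palette. -/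
open scoped Classical

/-! Every operation (i)–(iv) sends an alternating tuple `(x, y, …, x, y)` to another one:
the shift swaps `x` and `y`, (ii) and (iii) give `(c, x + y - c, …)` and `(c, x - y + c, …)`,
and (iv) fixes the tuple because `-a_1 + a_2 + a_3 = -x + y + x = y`. Only (i) needs the
length to be even, so that the entry after the last one, `a_1`, sits at an even position. -/

def altTuple {α : Type*} (n : ℕ) (x y : α) : Fin n → α :=
  fun i => if Even i.1 then x else y

lemma mk_mem_altSet_iff {p n : ℕ} (a : Fin n → ZMod p) :
    (⟨n, a⟩ : DehnTuple p) ∈ altSet p ↔ 0 < n ∧ Even n ∧ ∃ x y, a = altTuple n x y := by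
  simp only [altSet, Set.mem_ofPred_eq, funext_iff, altTuple]

lemma even_add_one_mod_iff {n i : ℕ} (hn : Even n) (hi : i < n) :
    Even ((i + 1) % n) ↔ ¬Even i := by
  rcases (Nat.add_one_le_of_lt hi).lt_or_eq with h | h
  · rw [Nat.mod_eq_of_lt h, Nat.even_add_one]
  · rw [h, Nat.mod_self, ← Nat.even_add_one, h]
    simpa using hn

section Operations

variable {p n : ℕ} (x y c : ZMod p)

lemma dOp1_altTuple (hn : 0 < n) (he : Even n) :
    dOp1 hn (altTuple n x y) = altTuple n y x := by
  ext i
  by_cases hi : Even i.1 <;>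
    simp [dOp1, altTuple, even_add_one_mod_iff he i.2, hi]

lemma dOp2_altTuple (hn : 0 < n) :
    dOp2 hn c (altTuple n x y) = altTuple n c (x + y - c) := by
  ext i
  by_cases hi : Even i.1
  · simp [dOp2, altTuple, hi, hi.add_one.neg_one_pow]
  · simp only [dOp2, altTuple, hi, ↓reduceIte, (Nat.even_add_one.mpr hi).neg_one_pow, Even.zero,
      one_mul]
    ring

lemma dOp3_altTuple (hn : 0 < n) :
    dOp3 hn c (altTuple n x y) = altTuple n c (x - y + c) := by
  ext i
  by_cases hi : Even i.1 <;> simp [dOp3, altTuple, hi]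

lemma dOp4_altTuple (hn : 2 < n) : dOp4 hn (altTuple n x y) = altTuple n x y := by
  ext i
  by_cases hi : i.1 = 1
  · simp [dOp4, altTuple, hi]
  · simp [dOp4, hi]

end Operations

theorem altSet_isRPalette_general (p : ℕ) : IsRPalette p (altSet p) := by
  simp only [IsRPalette, mk_mem_altSet_iff]
  refine ⟨?_, ?_, ?_, ?_⟩
  · rintro n hn _ ⟨-, he, x, y, rfl⟩
    exact ⟨hn, he, y, x, dOp1_altTuple x y hn he⟩
  · rintro n hn c _ ⟨-, he, x, y, rfl⟩
    exact ⟨hn, he, c, x + y - c, dOp2_altTuple x y c hn⟩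
  · rintro n hn c _ ⟨-, he, x, y, rfl⟩
    exact ⟨hn, he, c, x - y + c, dOp3_altTuple x y c hn⟩
  · rintro n hn _ ⟨hn₀, he, x, y, rfl⟩
    exact ⟨hn₀, he, x, y, dOp4_altTuple x y hn⟩

/-- the alternating set `A_p` is an `R`-palette for Dehn
`p`-colorings, i.e. it is closed under the operations (i)–(iv). -/
theorem altSet_isRPalette (p : ℕ) (hp : 2 ≤ p) : IsRPalette p (altSet p) :=
  altSet_isRPalette_general p
end
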